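/- For the Hamming ball B_k = {x ∈ F_2^k : ∑ x_i ≤ 1} of radius 1, the spectral norm satisfies √k/2 ≤ ‖1_{B_k}‖_A ≤ √(k+1). -/

import Mathlib

open Finset
open scoped Classical

noncomputable def chi {k : ℕ} (a x : Fin k → ZMod 2) : ℝ :=
  if ∑ i, a i * x i = (0 : ZMod 2) then 1 else -1

noncomputable def fhat {k : ℕ} (f : (Fin k → ZMod 2) → ℝ) (a : Fin k → ZMod 2) : ℝ :=
  (∑ x, f x * chi a x) / 2 ^ k

noncomputable def specNorm {k : ℕ} (f : (Fin k → ZMod 2) → ℝ) : ℝ :=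
  ∑ a, |fhat f a|

/-- The Hamming ball of radius 1 in `𝔽₂ᵏ`. -/
def hammingBall1 (k : ℕ) : Set (Fin k → ZMod 2) :=
  {x | (univ.filter fun i => x i ≠ 0).card ≤ 1}

noncomputable def ind {k : ℕ} (A : Set (Fin k → ZMod 2)) : (Fin k → ZMod 2) → ℝ :=
  fun x => if x ∈ A then 1 else 0

/-!
The Fourier coefficient of `1_{B_k}` at `a` is `(1 + S(a)) / 2^k`, where `S(a) = ∑ᵢ (-1)^{aᵢ}`
is a sum of `k` independent random signs when `a` is uniform on `𝔽₂ᵏ`. Hence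
`‖1_{B_k}‖_A = 𝔼|1 + S|`, while peeling off one coordinate at a time gives
`𝔼(1 + S)² = k + 1` and `𝔼(1 + S)⁴ = (k + 1)(3k + 1)`. The upper bound is Cauchy–Schwarz,
`𝔼|X| ≤ (𝔼X²)^{1/2}`; the lower bound is the moment inequality `(𝔼X²)³ ≤ (𝔼|X|)² 𝔼X⁴`, giving
`(𝔼|1 + S|)² ≥ (k + 1)² / (3k + 1) ≥ k / 4`.
-/

theorem sum_sq_pow_three_le_sq_sum_mul_sum_pow_four {ι : Type*} (s : Finset ι) {u : ι → ℝ}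
    (hu : ∀ i ∈ s, 0 ≤ u i) :
    (∑ i ∈ s, u i ^ 2) ^ 3 ≤ (∑ i ∈ s, u i) ^ 2 * ∑ i ∈ s, u i ^ 4 := by
  have cs₁ : (∑ i ∈ s, u i ^ 2) ^ 2 ≤ (∑ i ∈ s, u i) * ∑ i ∈ s, u i ^ 3 :=
    sum_sq_le_sum_mul_sum_of_sq_le_mul s hu (fun i hi => pow_nonneg (hu i hi) 3)
      (fun i _ => le_of_eq (by ring))
  have cs₂ : (∑ i ∈ s, u i ^ 3) ^ 2 ≤ (∑ i ∈ s, u i ^ 2) * ∑ i ∈ s, u i ^ 4 :=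
    sum_sq_le_sum_mul_sum_of_sq_le_mul s (fun i _ => sq_nonneg (u i))
      (fun i _ => by positivity) (fun i _ => le_of_eq (by ring))
  set A := ∑ i ∈ s, u i ^ 2
  set B := ∑ i ∈ s, u i
  have hA : 0 ≤ A := sum_nonneg fun i _ => sq_nonneg (u i)
  have key : A * A ^ 3 ≤ A * (B ^ 2 * ∑ i ∈ s, u i ^ 4) :=
    calc A * A ^ 3 = (A ^ 2) ^ 2 := by ring
      _ ≤ (B * ∑ i ∈ s, u i ^ 3) ^ 2 := pow_le_pow_left₀ (sq_nonneg A) cs₁ 2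
      _ = B ^ 2 * (∑ i ∈ s, u i ^ 3) ^ 2 := by ring
      _ ≤ B ^ 2 * (A * ∑ i ∈ s, u i ^ 4) := mul_le_mul_of_nonneg_left cs₂ (sq_nonneg B)
      _ = A * (B ^ 2 * ∑ i ∈ s, u i ^ 4) := by ring
  rcases hA.eq_or_lt with hA0 | hApos
  · rw [← hA0, zero_pow three_ne_zero]; positivity
  · exact le_of_mul_le_mul_left key hApos

section HammingBall

variable {k : ℕ}

noncomputable def signSum (a : Fin k → ZMod 2) : ℝ :=
  ∑ i, if a i = 0 then 1 else -1

lemma chi_single_one (a : Fin k → ZMod 2) (i : Fin k) :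
    chi a (Pi.single i 1) = if a i = 0 then 1 else -1 := by
  simp [chi, Pi.single_apply]

lemma single_one_injective :
    Function.Injective fun i : Fin k => (Pi.single i 1 : Fin k → ZMod 2) := by
  intro i j h
  simpa [Pi.single_apply] using congrFun h i

lemma mem_hammingBall1_iff (x : Fin k → ZMod 2) :
    x ∈ hammingBall1 k ↔ x = 0 ∨ ∃ i, x = Pi.single i 1 := by
  have hone : ∀ u : ZMod 2, u ≠ 0 → u = 1 := by decide
  simp only [hammingBall1, Set.mem_ofPred_eq, card_le_one, mem_filter, mem_univ, true_and]
  constructor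
  · intro h
    by_cases hx : ∃ i, x i ≠ 0
    · obtain ⟨i, hi⟩ := hx
      refine Or.inr ⟨i, funext fun j => ?_⟩
      by_cases hj : j = i
      · subst hj; simpa using hone _ hi
      · simp only [Pi.single_apply, hj, if_false]
        by_contra hxj
        exact hj (h j hxj i hi)
    · push Not at hx
      exact Or.inl (funext hx)
  · rintro (rfl | ⟨i, rfl⟩) j hj l hl
    · simp at hj
    · simp only [Pi.single_apply] at hj hl
      grind

lemma sum_ind_hammingBall1_mul_chi (a : Fin k → ZMod 2) :
    ∑ x, ind (hammingBall1 k) x * chi a x = 1 + signSum a := by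
  have hball : univ.filter (· ∈ hammingBall1 k) =
      insert 0 (univ.map ⟨_, single_one_injective (k := k)⟩) := by
    ext x
    simp [mem_hammingBall1_iff, eq_comm]
  have hzero : (0 : Fin k → ZMod 2) ∉ univ.map ⟨_, single_one_injective (k := k)⟩ := by
    simp [funext_iff, Pi.single_apply]
  simp only [ind, ite_mul, one_mul, zero_mul]
  rw [← sum_filter, hball, sum_insert hzero, sum_map]
  simp only [Function.Embedding.coeFn_mk, chi_single_one]
  simp [signSum, chi]

lemma specNorm_ind_hammingBall1 :
    specNorm (ind (hammingBall1 k)) = (∑ a : Fin k → ZMod 2, |1 + signSum a|) / 2 ^ k := by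
  simp only [specNorm, fhat, sum_ind_hammingBall1_mul_chi, abs_div, sum_div]
  simp

lemma sum_signSum_succ (g : ℝ → ℝ) :
    ∑ a : Fin (k + 1) → ZMod 2, g (signSum a) =
      ∑ a : Fin k → ZMod 2, g (1 + signSum a) + ∑ a : Fin k → ZMod 2, g (-1 + signSum a) := by
  have sum_zmod_two (f : ZMod 2 → ℝ) : ∑ b, f b = f 0 + f 1 := Fin.sum_univ_two f
  rw [← Fintype.sum_equiv (Fin.consEquiv fun _ => ZMod 2) _ _ (fun _ => rfl),
    Fintype.sum_prod_type, sum_zmod_two]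
  simp [signSum, Fin.sum_univ_succ]

lemma sum_add_signSum_sq (c : ℝ) :
    ∑ a : Fin k → ZMod 2, (c + signSum a) ^ 2 = 2 ^ k * (c ^ 2 + k) := by
  induction k generalizing c with
  | zero => simp [signSum]
  | succ k ih =>
    rw [sum_signSum_succ (fun s => (c + s) ^ 2)]
    simp only [← add_assoc, ih]
    push_cast; ring

lemma sum_add_signSum_pow_four (c : ℝ) :
    ∑ a : Fin k → ZMod 2, (c + signSum a) ^ 4 =
      2 ^ k * (c ^ 4 + 6 * k * c ^ 2 + 3 * k ^ 2 - 2 * k) := by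
  induction k generalizing c with
  | zero => simp [signSum]
  | succ k ih =>
    rw [sum_signSum_succ (fun s => (c + s) ^ 4)]
    simp only [← add_assoc, ih]
    push_cast; ring

lemma sum_abs_one_add_signSum_sq :
    ∑ a : Fin k → ZMod 2, |1 + signSum a| ^ 2 = 2 ^ k * (k + 1) := by
  simp only [sq_abs, sum_add_signSum_sq]
  ring

lemma sum_abs_one_add_signSum_pow_four :
    ∑ a : Fin k → ZMod 2, |1 + signSum a| ^ 4 = 2 ^ k * ((k + 1) * (3 * k + 1)) := by
  simp only [Even.pow_abs ⟨2, rfl⟩, sum_add_signSum_pow_four]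
  ring

lemma specNorm_ind_hammingBall1_sq_le : specNorm (ind (hammingBall1 k)) ^ 2 ≤ k + 1 := by
  rw [specNorm_ind_hammingBall1, div_pow, div_le_iff₀ (by positivity)]
  calc (∑ a : Fin k → ZMod 2, |1 + signSum a|) ^ 2
      ≤ #univ * ∑ a : Fin k → ZMod 2, |1 + signSum a| ^ 2 := sq_sum_le_card_mul_sum_sq
    _ = (k + 1) * (2 ^ k) ^ 2 := by
      rw [sum_abs_one_add_signSum_sq, card_univ, Fintype.card_fun]
      simp only [ZMod.card, Fintype.card_fin]
      push_cast; ring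

lemma le_two_mul_specNorm_ind_hammingBall1_sq :
    k ≤ (2 * specNorm (ind (hammingBall1 k))) ^ 2 := by
  have hmoments := sum_sq_pow_three_le_sq_sum_mul_sum_pow_four univ
    (u := fun a : Fin k → ZMod 2 => |1 + signSum a|) (fun a _ => abs_nonneg _)
  rw [sum_abs_one_add_signSum_sq, sum_abs_one_add_signSum_pow_four] at hmoments
  rw [specNorm_ind_hammingBall1, mul_div_assoc', div_pow, le_div_iff₀ (by positivity)]
  set s := ∑ a : Fin k → ZMod 2, |1 + signSum a|
  set N : ℝ := 2 ^ k
  have hratio : N ^ 2 * (k + 1) ^ 2 ≤ s ^ 2 * (3 * k + 1) := by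
    refine le_of_mul_le_mul_left ?_ (by positivity : 0 < N * (k + 1))
    nlinarith [hmoments]
  have : k * N ^ 2 * (3 * k + 1) ≤ (2 * s) ^ 2 * (3 * k + 1) := by
    nlinarith [sq_nonneg N]
  exact le_of_mul_le_mul_right this (by positivity)

end HammingBall

theorem stmt7 (k : ℕ) :
    Real.sqrt k / 2 ≤ specNorm (ind (hammingBall1 k)) ∧
      specNorm (ind (hammingBall1 k)) ≤ Real.sqrt (k + 1) := by
  have hnonneg : 0 ≤ specNorm (ind (hammingBall1 k)) := sum_nonneg fun _ _ => abs_nonneg _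
  refine ⟨?_, (le_abs_self _).trans (Real.abs_le_sqrt specNorm_ind_hammingBall1_sq_le)⟩
  have := (Real.sqrt_le_left (by positivity)).2 le_two_mul_specNorm_ind_hammingBall1_sq
  linarith
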